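/- Let R be a Noetherian commutative ring and (M_k)_{k∈ℕ} an increasing chain of R-modules (M_k a submodule of M_{k+1}) such that for every ideal I of R, every R-linear map I → M_k extends to an R-linear map R → M_{k+1}. Then the union (direct limit) M_ω = ⋃_k M_k is an injective R-module. -/

import Mathlib

/-!
By Baer's criterion it suffices to extend maps `f : I → ⋃ₖ Mₖ` from ideals to `R`. As `R` is
Noetherian, `I` is finitely generated, so the range of `f` is a compact submodule; since the chain
is directed, it already lies in a single `Mₖ`, and the hypothesis extends `f` into `Mₖ₊₁`.
-/

theorem CompleteLattice.IsCompactElement.exists_le_of_le_iSup_of_directed {α ι : Type*}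
    [CompleteLattice α] [Nonempty ι] {k : α} (hk : IsCompactElement k) {f : ι → α}
    (hf : Directed (· ≤ ·) f) (hle : k ≤ ⨆ i, f i) : ∃ i, k ≤ f i := by
  obtain ⟨_, ⟨i, rfl⟩, hi⟩ := (isCompactElement_iff_le_of_directed_sSup_le α k).mp hk
    (Set.range f) (Set.range_nonempty f) hf.directedOn_range hle
  exact ⟨i, hi⟩

theorem LinearMap.exists_range_le_of_le_iSup_of_directed {R M P ι : Type*} [Semiring R]
    [AddCommMonoid M] [Module R M] [AddCommMonoid P] [Module R P] [Module.Finite R P]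
    [Nonempty ι] {N : ι → Submodule R M} (hN : Directed (· ≤ ·) N) (f : P →ₗ[R] M)
    (hf : range f ≤ ⨆ i, N i) : ∃ i, range f ≤ N i :=
  CompleteLattice.IsCompactElement.exists_le_of_le_iSup_of_directed
    ((Submodule.fg_iff_compact _).mp (Submodule.fg_range f)) hN hf

theorem union_of_chain_injective
    (R : Type*) [CommRing R] [IsNoetherianRing R]
    (M : Type*) [AddCommGroup M] [Module R M]
    (N : ℕ → Submodule R M) (hmono : ∀ k, N k ≤ N (k + 1))
    (hext : ∀ (k : ℕ) (I : Ideal R) (f : I →ₗ[R] M), LinearMap.range f ≤ N k →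
      ∃ g : R →ₗ[R] M, LinearMap.range g ≤ N (k + 1) ∧ ∀ x : I, g (x : R) = f x) :
    Module.Injective R (⨆ k, N k : Submodule R M) := by
  refine Module.Baer.injective fun I f => ?_
  let f' : I →ₗ[R] M := (⨆ k, N k).subtype ∘ₗ f
  have hf' : LinearMap.range f' ≤ ⨆ k, N k :=
    (LinearMap.range_comp_le_range _ _).trans (Submodule.range_subtype _).le
  obtain ⟨k, hk⟩ := f'.exists_range_le_of_le_iSup_of_directed
    (monotone_nat_of_le_succ hmono).directed_le hf'
  obtain ⟨g, hg, hgf⟩ := hext k I f' hk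
  exact ⟨g.codRestrict _ fun r => le_iSup N (k + 1) (hg ⟨r, rfl⟩),
    fun r hr => Subtype.ext (hgf ⟨r, hr⟩)⟩
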